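/- The following strong isomorphisms hold, each proved by an FHI: idempotence (σ∧σ ≈ₛ σ, σ∨σ ≈ₛ σ), commutativity (σ∧τ ≈ₛ τ∧σ, σ∨τ ≈ₛ τ∨σ), associativity for ∧ and ∨, distributivity (σ∨τ)∧ρ ≈ₛ (σ∧ρ)∨(τ∧ρ) and (σ∧τ)∨ρ ≈ₛ (σ∨ρ)∧(τ∨ρ), and the arrow distributions σ → τ∧ρ ≈ₛ (σ→τ)∧(σ→ρ) and σ∨τ → ρ ≈ₛ (σ→ρ)∧(τ→ρ). -/
import Mathlib


namespace TypeIso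

open Relation

/-- Untyped λ-terms with named variables. -/
inductive Term : Type
  | var : ℕ → Term
  | app : Term → Term → Term
  | lam : ℕ → Term → Term
deriving DecidableEq

namespace Term

/-- Free variables. -/
def fv : Term → Finset ℕ
  | var x => {x}
  | app M N => fv M ∪ fv N
  | lam x M => fv M \ {x}

/-- Substitution `M[N/x]` (naive; adequate for the linear terms considered). -/
def subst : Term → ℕ → Term → Term
  | var y, x, N => if y = x then N else var y
  | app M₁ M₂, x, N => app (subst M₁ x N) (subst M₂ x N)
  | lam y M, x, N => if y = x then lam y M else lam y (subst M x N)

end Term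

open Term

/-- One-step β-reduction. -/
inductive Beta : Term → Term → Prop
  | beta (x M N) : Beta (Term.app (Term.lam x M) N) (Term.subst M x N)
  | appL {M M'} (N) : Beta M M' → Beta (Term.app M N) (Term.app M' N)
  | appR (M) {N N'} : Beta N N' → Beta (Term.app M N) (Term.app M N')
  | lam (x) {M M'} : Beta M M' → Beta (Term.lam x M) (Term.lam x M')

/-- One-step η-reduction. -/
inductive Eta : Term → Term → Prop
  | eta (x M) : x ∉ fv M → Eta (Term.lam x (Term.app M (Term.var x))) M
  | appL {M M'} (N) : Eta M M' → Eta (Term.app M N) (Term.app M' N)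
  | appR (M) {N N'} : Eta N N' → Eta (Term.app M N) (Term.app M N')
  | lam (x) {M M'} : Eta M M' → Eta (Term.lam x M) (Term.lam x M')

def BetaStar : Term → Term → Prop := ReflTransGen Beta
def EtaStar : Term → Term → Prop := ReflTransGen Eta
/-- η-expansion: the converse of one-step η-reduction. -/
def EtaExp : Term → Term → Prop := fun a b => Eta b a
def EtaExpStar : Term → Term → Prop := ReflTransGen EtaExp
def BetaConv : Term → Term → Prop := EqvGen Beta
def BetaEta : Term → Term → Prop := fun a b => Beta a b ∨ Eta a b
def BetaEtaConv : Term → Term → Prop := EqvGen BetaEta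

def BetaEtaRed : Term → Term → Prop := ReflTransGen BetaEta

/-- `appList h [a₁,…,aₙ] = h a₁ … aₙ`. -/
def appList (h : Term) (args : List Term) : Term := args.foldl Term.app h
/-- `lamList [y₁,…,yₙ] M = λ y₁ … yₙ. M`. -/
def lamList (xs : List ℕ) (body : Term) : Term := xs.foldr Term.lam body

/-- β-normal finite hereditary permutators:
`λ x y₁ … yₙ. x (P₁ y_{π(1)}) … (Pₙ y_{π(n)})` with each `Pᵢ` an FHP. -/
inductive FHPnf : Term → Prop
  | mk (x : ℕ) (ys : List ℕ) (Ps : List Term) (π : Equiv.Perm (Fin ys.length))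
      (hlen : Ps.length = ys.length)
      (hx : x ∉ ys) (hnd : ys.Nodup)
      (hPs : ∀ P ∈ Ps, FHPnf P) :
      FHPnf (Term.lam x (lamList ys (appList (Term.var x)
        (List.ofFn fun i : Fin ys.length =>
          Term.app (Ps.get (Fin.cast hlen.symm i)) (Term.var (ys.get (π i)))))))

/-- Finite hereditary permutators (modulo β-conversion). -/
def FHP (M : Term) : Prop := ∃ N, BetaConv M N ∧ FHPnf N

/-- β-normal finite hereditary identities:
`λ x y₁ … yₙ. x (Id₁ y₁) … (Idₙ yₙ)` with each `Idᵢ` an FHI. -/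
inductive FHInf : Term → Prop
  | mk (x : ℕ) (ys : List ℕ) (Ids : List Term)
      (hlen : Ids.length = ys.length)
      (hx : x ∉ ys) (hnd : ys.Nodup)
      (hIds : ∀ P ∈ Ids, FHInf P) :
      FHInf (Term.lam x (lamList ys (appList (Term.var x)
        (List.ofFn fun i : Fin ys.length =>
          Term.app (Ids.get (Fin.cast hlen.symm i)) (Term.var (ys.get i))))))

/-- Finite hereditary identities (modulo β-conversion). -/
def FHI (M : Term) : Prop := ∃ N, BetaConv M N ∧ FHInf N

/-- Types with atoms, ω, arrow, intersection and union. -/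
inductive Ty : Type
  | atom : ℕ → Ty
  | omega : Ty
  | arr : Ty → Ty → Ty
  | and : Ty → Ty → Ty
  | or : Ty → Ty → Ty
deriving DecidableEq

/-- Semantic type equivalence `≅`: the least congruence with
`φ ≅ ω→φ`, `ω ≅ ω→ω`, `σ ≅ σ∧ω ≅ ω∧σ`, `ω ≅ σ∨ω ≅ ω∨σ`. -/
inductive SemEq : Ty → Ty → Prop
  | refl (σ) : SemEq σ σ
  | symm : SemEq σ τ → SemEq τ σ
  | trans : SemEq σ τ → SemEq τ ρ → SemEq σ ρ
  | arr : SemEq σ σ' → SemEq τ τ' → SemEq (Ty.arr σ τ) (Ty.arr σ' τ')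
  | and : SemEq σ σ' → SemEq τ τ' → SemEq (Ty.and σ τ) (Ty.and σ' τ')
  | or : SemEq σ σ' → SemEq τ τ' → SemEq (Ty.or σ τ) (Ty.or σ' τ')
  | atomFun (a) : SemEq (Ty.atom a) (Ty.arr Ty.omega (Ty.atom a))
  | omegaFun : SemEq Ty.omega (Ty.arr Ty.omega Ty.omega)
  | andOmegaR (σ) : SemEq σ (Ty.and σ Ty.omega)
  | andOmegaL (σ) : SemEq σ (Ty.and Ty.omega σ)
  | orOmegaR (σ) : SemEq Ty.omega (Ty.or σ Ty.omega)
  | orOmegaL (σ) : SemEq Ty.omega (Ty.or Ty.omega σ)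

/-- Relevant environments, considered up to permutation in the rules. -/
abbrev Env := List (ℕ × Ty)

def Env.dom (Γ : Env) : List ℕ := Γ.map Prod.fst

def EnvDisj (Γ₁ Γ₂ : Env) : Prop := ∀ x, x ∈ Γ₁.dom → x ∉ Γ₂.dom

/-- The intersection-union type assignment system for linear λ-terms (Figure 1). -/
inductive Deriv : Env → Term → Ty → Prop
  | ax (x σ) : Deriv [(x, σ)] (Term.var x) σ
  | eqv {Γ M σ τ} : Deriv Γ M σ → SemEq σ τ → Deriv Γ M τ
  | perm {Γ Γ' M σ} : Deriv Γ M σ → Γ.Perm Γ' → Deriv Γ' M σ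
  | arrI {Γ x σ M τ} : Deriv ((x, σ) :: Γ) M τ → Deriv Γ (Term.lam x M) (Ty.arr σ τ)
  | arrE {Γ₁ Γ₂ M N σ τ} : Deriv Γ₁ M (Ty.arr σ τ) → Deriv Γ₂ N σ → EnvDisj Γ₁ Γ₂ →
      Deriv (Γ₁ ++ Γ₂) (Term.app M N) τ
  | andI {Γ M σ τ} : Deriv Γ M σ → Deriv Γ M τ → Deriv Γ M (Ty.and σ τ)
  | andE₁ {Γ M σ τ} : Deriv Γ M (Ty.and σ τ) → Deriv Γ M σ
  | andE₂ {Γ M σ τ} : Deriv Γ M (Ty.and σ τ) → Deriv Γ M τ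
  | orI₁ {Γ M σ τ} : Deriv Γ M σ → Deriv Γ M (Ty.or σ τ)
  | orI₂ {Γ M σ τ} : Deriv Γ M σ → Deriv Γ M (Ty.or τ σ)
  | orE {Γ₁ Γ₂ x M N σ τ ζ ρ} :
      Deriv ((x, Ty.and σ ζ) :: Γ₁) M ρ →
      Deriv ((x, Ty.and τ ζ) :: Γ₁) M ρ →
      Deriv Γ₂ N (Ty.and (Ty.or σ τ) ζ) → EnvDisj Γ₁ Γ₂ →
      Deriv (Γ₁ ++ Γ₂) (Term.subst M x N) ρ

/-- Linear λ-terms: every free or bound variable occurs exactly once. -/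
inductive Linear : Term → Prop
  | var (x) : Linear (Term.var x)
  | app {M N} : Linear M → Linear N → Disjoint (fv M) (fv N) → Linear (Term.app M N)
  | lam {x M} : Linear M → x ∈ fv M → Linear (Term.lam x M)

/-- A variable fresh for a finite set. -/
def freshVar (s : Finset ℕ) : ℕ := (s.sup id) + 1

/-- Composition `λx. P (Q x)` with a fresh `x`. -/
def tcomp (P Q : Term) : Term :=
  Term.lam (freshVar (fv P ∪ fv Q))
    (Term.app P (Term.app Q (Term.var (freshVar (fv P ∪ fv Q)))))

/-- `P` and `Q` are inverse of each other: both compositions are βη-equal to the identity. -/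
def InvPair (P Q : Term) : Prop :=
  ∃ x, BetaEtaConv (tcomp P Q) (Term.lam x (Term.var x)) ∧
       BetaEtaConv (tcomp Q P) (Term.lam x (Term.var x))

/-- Type isomorphism `σ ≈ τ`. -/
def TyIso (σ τ : Ty) : Prop :=
  ∃ P Q, FHP P ∧ FHP Q ∧ InvPair P Q ∧
    Deriv [] P (Ty.arr σ τ) ∧ Deriv [] Q (Ty.arr τ σ)

/-- Strong type isomorphism `σ ≈ₛ τ`: proved by a finite hereditary identity. -/
def StrongIso (σ τ : Ty) : Prop :=
  ∃ Id, FHI Id ∧ Deriv [] Id (Ty.arr σ τ) ∧ Deriv [] Id (Ty.arr τ σ)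

/-- The normalisation pre-order `≤` on types. -/
inductive NormLe : Ty → Ty → Prop
  | refl (σ) : NormLe σ σ
  | trans {σ τ ρ} : NormLe σ τ → NormLe τ ρ → NormLe σ ρ
  | leOmega (σ) : NormLe σ Ty.omega
  | andE₁ (σ τ) : NormLe (Ty.and σ τ) σ
  | andE₂ (σ τ) : NormLe (Ty.and σ τ) τ
  | orI₁ (σ τ) : NormLe σ (Ty.or σ τ)
  | orI₂ (σ τ) : NormLe τ (Ty.or σ τ)
  | andI {σ τ ρ} : NormLe σ τ → NormLe σ ρ → NormLe σ (Ty.and τ ρ)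
  | orE {σ τ ρ} : NormLe σ τ → NormLe ρ τ → NormLe (Ty.or σ ρ) τ
  | atomArr (a σ) : NormLe (Ty.atom a) (Ty.arr σ (Ty.atom a))
  | omegaArr (σ) : NormLe Ty.omega (Ty.arr σ Ty.omega)
  | arr {σ σ' τ τ'} : NormLe σ' σ → NormLe τ τ' → NormLe (Ty.arr σ τ) (Ty.arr σ' τ')

/-- Inner type normalisation rules `σ ⇝ τ`. -/
inductive InnerStep : Ty → Ty → Prop
  | atomRule (a) : InnerStep (Ty.arr Ty.omega (Ty.atom a)) (Ty.atom a)
  | omegaRule {σ} : NormLe Ty.omega σ → σ ≠ Ty.omega → InnerStep σ Ty.omega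
  | distArrAnd (σ τ ρ) :
      InnerStep (Ty.arr σ (Ty.and τ ρ)) (Ty.and (Ty.arr σ τ) (Ty.arr σ ρ))
  | distAndArr (σ τ ρ ζ) :
      InnerStep (Ty.arr (Ty.and (Ty.or σ τ) ρ) ζ)
                (Ty.arr (Ty.or (Ty.and σ ρ) (Ty.and τ ρ)) ζ)
  | distOrArr (σ τ ρ) :
      InnerStep (Ty.arr (Ty.or σ τ) ρ) (Ty.and (Ty.arr σ ρ) (Ty.arr τ ρ))
  | distArrOr (σ τ ρ ζ) :
      InnerStep (Ty.arr σ (Ty.or (Ty.and τ ρ) ζ))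
                (Ty.arr σ (Ty.and (Ty.or τ ζ) (Ty.or ρ ζ)))
  | eraseAnd {σ τ} : NormLe σ τ → InnerStep (Ty.and σ τ) σ
  | eraseOr {σ τ} : NormLe σ τ → InnerStep (Ty.or σ τ) τ

/-- Type contexts. -/
inductive TyCtx : Type
  | hole : TyCtx
  | arrL : TyCtx → Ty → TyCtx
  | arrR : Ty → TyCtx → TyCtx
  | andL : TyCtx → Ty → TyCtx
  | andR : Ty → TyCtx → TyCtx
  | orL : TyCtx → Ty → TyCtx
  | orR : Ty → TyCtx → TyCtx

/-- Filling the hole of a type context. -/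
def TyCtx.fill : TyCtx → Ty → Ty
  | TyCtx.hole, τ => τ
  | TyCtx.arrL C σ, τ => Ty.arr (C.fill τ) σ
  | TyCtx.arrR σ C, τ => Ty.arr σ (C.fill τ)
  | TyCtx.andL C σ, τ => Ty.and (C.fill τ) σ
  | TyCtx.andR σ C, τ => Ty.and σ (C.fill τ)
  | TyCtx.orL C σ, τ => Ty.or (C.fill τ) σ
  | TyCtx.orR σ C, τ => Ty.or σ (C.fill τ)

/-- Top normalisation rules `σ ⟹ τ`: contextual closure of the inner rules,
plus `(σ∧τ)∨ρ ⟹ (σ∨ρ)∧(τ∨ρ)` at the top or in right-hand sides of arrows. -/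
inductive TopStep : Ty → Ty → Prop
  | ctx {σ τ} (C : TyCtx) : InnerStep σ τ → TopStep (C.fill σ) (C.fill τ)
  | dist (σ τ ρ) :
      TopStep (Ty.or (Ty.and σ τ) ρ) (Ty.and (Ty.or σ ρ) (Ty.or τ ρ))
  | arrR {τ τ'} (σ) : TopStep τ τ' → TopStep (Ty.arr σ τ) (Ty.arr σ τ')

open Classical in
/-- The normal form of a type w.r.t. the top normalisation rules. -/
noncomputable def nf (σ : Ty) : Ty :=
  if h : ∃ ν, Relation.ReflTransGen TopStep σ ν ∧ ∀ ρ, ¬ TopStep ν ρ then h.choose else σ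

/-- `mkArrow [ξ₁,…,ξₙ] μ = ξ₁ → … → ξₙ → μ`. -/
def mkArrow (args : List Ty) (res : Ty) : Ty := args.foldr Ty.arr res

/-- Similarity between sequences of normal types. -/
inductive TySim : List Ty → List Ty → Prop
  | refl (l) : TySim l l
  | symm {l r} : TySim l r → TySim r l
  | trans {l r s} : TySim l r → TySim r s → TySim l s
  | mergeAnd (l₁ l₂ r₁ r₂ : List Ty) (η₁ η₂ θ₁ θ₂ : Ty) :
      l₁.length = r₁.length →
      TySim (l₁ ++ η₁ :: η₂ :: l₂) (r₁ ++ θ₁ :: θ₂ :: r₂) →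
      TySim (l₁ ++ nf (Ty.and η₁ η₂) :: l₂) (r₁ ++ nf (Ty.and θ₁ θ₂) :: r₂)
  | mergeOr (l₁ l₂ r₁ r₂ : List Ty) (η₁ η₂ θ₁ θ₂ : Ty) :
      l₁.length = r₁.length →
      TySim (l₁ ++ η₁ :: η₂ :: l₂) (r₁ ++ θ₁ :: θ₂ :: r₂) →
      TySim (l₁ ++ nf (Ty.or η₁ η₂) :: l₂) (r₁ ++ nf (Ty.or θ₁ θ₂) :: r₂)
  | arrow (m n : ℕ) (ξ χ : Fin n → Fin m → Ty) (μ ν : Fin m → Ty)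
      (π : Equiv.Perm (Fin n)) :
      (∀ i, TySim (List.ofFn (ξ i)) (List.ofFn (χ i))) →
      TySim (List.ofFn μ) (List.ofFn ν) →
      TySim (List.ofFn fun j => nf (mkArrow (List.ofFn fun i => ξ i j) (μ j)))
            (List.ofFn fun j => nf (mkArrow (List.ofFn fun i => χ (π i) j) (ν j)))

/-! ### Auxiliary material for Lemma 3.5 -/

/-- The identity `λx.x`. -/
def Iterm : Term := Term.lam 0 (Term.var 0)

/-- The term `λx y. x y`. -/
def Cterm : Term := Term.lam 0 (Term.lam 1 (Term.app (Term.var 0) (Term.var 1)))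

/-- β-normal FHI corresponding to `λx y. x y`. -/
def Cnf : Term := Term.lam 0 (Term.lam 1 (Term.app (Term.var 0) (Term.app Iterm (Term.var 1))))

lemma fhinf_I : FHInf Iterm := by
  have h := FHInf.mk 0 [] [] rfl (by simp) List.nodup_nil (by simp)
  simpa [Iterm, lamList, appList] using h

lemma fhi_I : FHI Iterm := ⟨Iterm, EqvGen.refl _, fhinf_I⟩

lemma fhinf_Cnf : FHInf Cnf := by
  have h := FHInf.mk 0 [1] [Iterm] rfl (by simp) (by simp) (by
    intro P hP; simp at hP; subst hP; exact fhinf_I)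
  simpa [Cnf, lamList, appList, List.ofFn_succ] using h

lemma fhi_C : FHI Cterm := by
  refine ⟨Cnf, ?_, fhinf_Cnf⟩
  refine EqvGen.symm _ _ (EqvGen.rel _ _ ?_)
  refine Beta.lam 0 (Beta.lam 1 (Beta.appR (Term.var 0) ?_))
  have h := Beta.beta 0 (Term.var 0) (Term.var 1)
  simpa [Iterm, Term.subst] using h

lemma vax (x : ℕ) (α : Ty) : Deriv [(x, Ty.and α Ty.omega)] (Term.var x) α :=
  Deriv.eqv (Deriv.ax x _) ((SemEq.andOmegaR α).symm)

lemma dorE' {Γ : Env} {N : Term} {α β ζ ρ : Ty} (x : ℕ)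
    (h : Deriv Γ N (Ty.and (Ty.or α β) ζ))
    (h1 : Deriv [(x, Ty.and α ζ)] (Term.var x) ρ)
    (h2 : Deriv [(x, Ty.and β ζ)] (Term.var x) ρ) :
    Deriv Γ N ρ := by
  have hd : EnvDisj ([] : Env) Γ := fun y hy => by simp [Env.dom] at hy
  have h0 := Deriv.orE (Γ₁ := []) (x := x) (M := Term.var x) h1 h2 h hd
  simpa [Term.subst] using h0

lemma dorE {Γ : Env} {N : Term} {α β ρ : Ty} (x : ℕ)
    (h : Deriv Γ N (Ty.or α β))
    (h1 : Deriv [(x, Ty.and α Ty.omega)] (Term.var x) ρ)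
    (h2 : Deriv [(x, Ty.and β Ty.omega)] (Term.var x) ρ) :
    Deriv Γ N ρ :=
  dorE' x (Deriv.eqv h (SemEq.andOmegaR _)) h1 h2

lemma disj01 {α β : Ty} : EnvDisj [(0, α)] [(1, β)] := by
  intro y hy
  simp [Env.dom] at hy ⊢
  omega

/-- The strong isomorphisms of Lemma 3.5: idempotence, commutativity,
associativity, distributivity, and the arrow distributions. -/
theorem basic_strong_isomorphisms :
    (∀ σ : Ty, StrongIso (Ty.and σ σ) σ) ∧
    (∀ σ : Ty, StrongIso (Ty.or σ σ) σ) ∧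
    (∀ σ τ : Ty, StrongIso (Ty.and σ τ) (Ty.and τ σ)) ∧
    (∀ σ τ : Ty, StrongIso (Ty.or σ τ) (Ty.or τ σ)) ∧
    (∀ σ τ ρ : Ty, StrongIso (Ty.and (Ty.and σ τ) ρ) (Ty.and σ (Ty.and τ ρ))) ∧
    (∀ σ τ ρ : Ty, StrongIso (Ty.or (Ty.or σ τ) ρ) (Ty.or σ (Ty.or τ ρ))) ∧
    (∀ σ τ ρ : Ty, StrongIso (Ty.and (Ty.or σ τ) ρ) (Ty.or (Ty.and σ ρ) (Ty.and τ ρ))) ∧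
    (∀ σ τ ρ : Ty, StrongIso (Ty.or (Ty.and σ τ) ρ) (Ty.and (Ty.or σ ρ) (Ty.or τ ρ))) ∧
    (∀ σ τ ρ : Ty, StrongIso (Ty.arr σ (Ty.and τ ρ)) (Ty.and (Ty.arr σ τ) (Ty.arr σ ρ))) ∧
    (∀ σ τ ρ : Ty, StrongIso (Ty.arr (Ty.or σ τ) ρ) (Ty.and (Ty.arr σ ρ) (Ty.arr τ ρ))) := by
  refine ⟨?_, ?_, ?_, ?_, ?_, ?_, ?_, ?_, ?_, ?_⟩
  · -- σ∧σ ≈ σ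
    intro σ
    refine ⟨Iterm, fhi_I, ?_, ?_⟩
    · exact Deriv.arrI (Deriv.andE₁ (Deriv.ax 0 _))
    · exact Deriv.arrI (Deriv.andI (Deriv.ax 0 σ) (Deriv.ax 0 σ))
  · -- σ∨σ ≈ σ
    intro σ
    refine ⟨Iterm, fhi_I, ?_, ?_⟩
    · exact Deriv.arrI (dorE 0 (Deriv.ax 0 _) (vax 0 σ) (vax 0 σ))
    · exact Deriv.arrI (Deriv.orI₁ (Deriv.ax 0 σ))
  · -- σ∧τ ≈ τ∧σ
    intro σ τ
    refine ⟨Iterm, fhi_I, ?_, ?_⟩ <;>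
      exact Deriv.arrI (Deriv.andI (Deriv.andE₂ (Deriv.ax 0 _)) (Deriv.andE₁ (Deriv.ax 0 _)))
  · -- σ∨τ ≈ τ∨σ
    intro σ τ
    refine ⟨Iterm, fhi_I, ?_, ?_⟩ <;>
      exact Deriv.arrI (dorE 0 (Deriv.ax 0 _) (Deriv.orI₂ (vax 0 _)) (Deriv.orI₁ (vax 0 _)))
  · -- (σ∧τ)∧ρ ≈ σ∧(τ∧ρ)
    intro σ τ ρ
    refine ⟨Iterm, fhi_I, ?_, ?_⟩
    · exact Deriv.arrI (Deriv.andI (Deriv.andE₁ (Deriv.andE₁ (Deriv.ax 0 _)))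
        (Deriv.andI (Deriv.andE₂ (Deriv.andE₁ (Deriv.ax 0 _))) (Deriv.andE₂ (Deriv.ax 0 _))))
    · exact Deriv.arrI (Deriv.andI
        (Deriv.andI (Deriv.andE₁ (Deriv.ax 0 _)) (Deriv.andE₁ (Deriv.andE₂ (Deriv.ax 0 _))))
        (Deriv.andE₂ (Deriv.andE₂ (Deriv.ax 0 _))))
  · -- (σ∨τ)∨ρ ≈ σ∨(τ∨ρ)
    intro σ τ ρ
    refine ⟨Iterm, fhi_I, ?_, ?_⟩
    · refine Deriv.arrI (dorE 0 (Deriv.ax 0 _) ?_ ?_)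
      · exact dorE 0 (vax 0 (Ty.or σ τ)) (Deriv.orI₁ (vax 0 σ))
          (Deriv.orI₂ (Deriv.orI₁ (vax 0 τ)))
      · exact Deriv.orI₂ (Deriv.orI₂ (vax 0 ρ))
    · refine Deriv.arrI (dorE 0 (Deriv.ax 0 _) ?_ ?_)
      · exact Deriv.orI₁ (Deriv.orI₁ (vax 0 σ))
      · exact dorE 0 (vax 0 (Ty.or τ ρ)) (Deriv.orI₁ (Deriv.orI₂ (vax 0 τ)))
          (Deriv.orI₂ (vax 0 ρ))
  · -- (σ∨τ)∧ρ ≈ (σ∧ρ)∨(τ∧ρ)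
    intro σ τ ρ
    refine ⟨Iterm, fhi_I, ?_, ?_⟩
    · exact Deriv.arrI (dorE' 0 (Deriv.ax 0 _)
        (Deriv.orI₁ (Deriv.ax 0 _)) (Deriv.orI₂ (Deriv.ax 0 _)))
    · refine Deriv.arrI (dorE 0 (Deriv.ax 0 _) ?_ ?_)
      · exact Deriv.andI (Deriv.orI₁ (Deriv.andE₁ (vax 0 _))) (Deriv.andE₂ (vax 0 _))
      · exact Deriv.andI (Deriv.orI₂ (Deriv.andE₁ (vax 0 _))) (Deriv.andE₂ (vax 0 _))
  · -- (σ∧τ)∨ρ ≈ (σ∨ρ)∧(τ∨ρ)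
    intro σ τ ρ
    refine ⟨Iterm, fhi_I, ?_, ?_⟩
    · refine Deriv.arrI (dorE 0 (Deriv.ax 0 _) ?_ ?_)
      · exact Deriv.andI (Deriv.orI₁ (Deriv.andE₁ (vax 0 _))) (Deriv.orI₁ (Deriv.andE₂ (vax 0 _)))
      · exact Deriv.andI (Deriv.orI₂ (vax 0 _)) (Deriv.orI₂ (vax 0 _))
    · refine Deriv.arrI (dorE' 0 (Deriv.ax 0 _) ?_ ?_)
      · -- from x : σ ∧ (τ∨ρ) derive (σ∧τ)∨ρ
        refine dorE' 0 (Deriv.andI (Deriv.andE₂ (Deriv.ax 0 _)) (Deriv.andE₁ (Deriv.ax 0 _))) ?_ ?_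
        · exact Deriv.orI₁ (Deriv.andI (Deriv.andE₂ (Deriv.ax 0 _)) (Deriv.andE₁ (Deriv.ax 0 _)))
        · exact Deriv.orI₂ (Deriv.andE₁ (Deriv.ax 0 _))
      · exact Deriv.orI₂ (Deriv.andE₁ (Deriv.ax 0 _))
  · -- σ→τ∧ρ ≈ (σ→τ)∧(σ→ρ)
    intro σ τ ρ
    refine ⟨Cterm, fhi_C, ?_, ?_⟩
    · refine Deriv.arrI (Deriv.andI (Deriv.arrI ?_) (Deriv.arrI ?_))
      · exact Deriv.perm (Deriv.andE₁ (Deriv.arrE (Deriv.ax 0 _) (Deriv.ax 1 σ) disj01))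
          (List.Perm.swap _ _ _)
      · exact Deriv.perm (Deriv.andE₂ (Deriv.arrE (Deriv.ax 0 _) (Deriv.ax 1 σ) disj01))
          (List.Perm.swap _ _ _)
    · refine Deriv.arrI (Deriv.arrI (Deriv.perm (Deriv.andI ?_ ?_) (List.Perm.swap _ _ _)))
      · exact Deriv.arrE (Deriv.andE₁ (Deriv.ax 0 _)) (Deriv.ax 1 σ) disj01
      · exact Deriv.arrE (Deriv.andE₂ (Deriv.ax 0 _)) (Deriv.ax 1 σ) disj01
  · -- (σ∨τ)→ρ ≈ (σ→ρ)∧(τ→ρ)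
    intro σ τ ρ
    refine ⟨Cterm, fhi_C, ?_, ?_⟩
    · refine Deriv.arrI (Deriv.andI (Deriv.arrI ?_) (Deriv.arrI ?_))
      · exact Deriv.perm (Deriv.arrE (Deriv.ax 0 _) (Deriv.orI₁ (Deriv.ax 1 σ)) disj01)
          (List.Perm.swap _ _ _)
      · exact Deriv.perm (Deriv.arrE (Deriv.ax 0 _) (Deriv.orI₂ (Deriv.ax 1 τ)) disj01)
          (List.Perm.swap _ _ _)
    · refine Deriv.arrI (Deriv.arrI ?_)
      have h1 : Deriv ((1, Ty.and σ Ty.omega) :: [(0, Ty.and (Ty.arr σ ρ) (Ty.arr τ ρ))])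
          (Term.app (Term.var 0) (Term.var 1)) ρ :=
        Deriv.perm (Deriv.arrE (Deriv.andE₁ (Deriv.ax 0 _)) (vax 1 σ) disj01)
          (List.Perm.swap _ _ _)
      have h2 : Deriv ((1, Ty.and τ Ty.omega) :: [(0, Ty.and (Ty.arr σ ρ) (Ty.arr τ ρ))])
          (Term.app (Term.var 0) (Term.var 1)) ρ :=
        Deriv.perm (Deriv.arrE (Deriv.andE₂ (Deriv.ax 0 _)) (vax 1 τ) disj01)
          (List.Perm.swap _ _ _)
      have h3 : Deriv [(1, Ty.or σ τ)] (Term.var 1) (Ty.and (Ty.or σ τ) Ty.omega) :=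
        Deriv.eqv (Deriv.ax 1 _) (SemEq.andOmegaR _)
      have h := Deriv.orE h1 h2 h3 disj01
      have hs : Term.subst (Term.app (Term.var 0) (Term.var 1)) 1 (Term.var 1) =
          Term.app (Term.var 0) (Term.var 1) := by simp [Term.subst]
      rw [hs] at h
      exact Deriv.perm h (List.Perm.swap _ _ _)

end TypeIso
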